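/- arXiv:2109.12256 — 2 statements merged into one kernel-verified Lean document; each statement's English description precedes it below -/
import Mathlib

section
/- Let Λ = HahnSeries ℝ ℂ be the Novikov field and let f : ℝ →₀ Λ be a nonzero finitely supported function, regarded as the finite formal sum Σ_{r ∈ f.support} f(r)·z^r ∈ Λ[z^ℝ]. If t₀ ∈ ℝ satisfies Σ_{r ∈ f.support} f(r) · HahnSeries.single (t₀·r) 1 = 0, then there exists ε > 0 such that for every t ∈ ℝ with 0 < |t − t₀| < ε one has Σ_{r ∈ f.support} f(r) · HahnSeries.single (t·r) 1 ≠ 0; in other words, the zeros of t ↦ f(T^t) are isolated. -/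
/-!
For fixed `t`, the term `f r · T^{t r}` is a nonzero Hahn series of order `ord (f r) + t r`.
A finite sum of nonzero Hahn series of pairwise distinct orders is nonzero, its lowest term
surviving. So `f(T^t) = 0` forces `ord (f r) + t r = ord (f r') + t r'` for some `r ≠ r'`,
which pins `t` down to one of finitely many values; a finite subset of `ℝ` has no
accumulation point.
-/

/-- The Novikov field `Λ = ℂ((T^ℝ))`, realized as Hahn series. -/
local notation "Λ" => HahnSeries ℝ ℂ

namespace HahnSeries

theorem sum_ne_zero_of_injOn_order {Γ R ι : Type*} [Zero Γ] [LinearOrder Γ] [AddCommMonoid R]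
    {s : Finset ι} {x : ι → HahnSeries Γ R} (hs : s.Nonempty) (hx : ∀ i ∈ s, x i ≠ 0)
    (hinj : Set.InjOn (fun i => (x i).order) s) : ∑ i ∈ s, x i ≠ 0 := by
  classical
  obtain ⟨i₀, hi₀, hmin⟩ := s.exists_min_image (fun i => (x i).order) hs
  have hlower : ∀ i ∈ s, i ≠ i₀ → (x i).coeff (x i₀).order = 0 := fun i hi hne =>
    coeff_eq_zero_of_lt_order <|
      (hmin i hi).lt_of_ne fun heq => hne (hinj hi hi₀ heq.symm)
  intro hsum
  have hcoeff := congrArg (coeff · (x i₀).order) hsum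
  simp only [coeff_sum, coeff_zero] at hcoeff
  rw [Finset.sum_eq_single_of_mem i₀ hi₀ hlower] at hcoeff
  exact hx i₀ hi₀ (coeff_order_eq_zero.mp hcoeff)

variable {Γ R : Type*} [AddCommMonoid Γ] [LinearOrder Γ] [IsOrderedCancelAddMonoid Γ]
  [Semiring R] {x : HahnSeries Γ R}

theorem coeff_mul_single_one_order_add (x : HahnSeries Γ R) (c : Γ) :
    (x * single c 1).coeff (x.order + c) = x.leadingCoeff := by
  rw [coeff_mul_single_add, mul_one, leadingCoeff_eq]

theorem mul_single_one_ne_zero (hx : x ≠ 0) (c : Γ) : x * single c (1 : R) ≠ 0 :=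
  ne_zero_of_coeff_ne_zero <| by
    rwa [coeff_mul_single_one_order_add, leadingCoeff_ne_zero]

theorem order_mul_single_one (hx : x ≠ 0) (c : Γ) :
    (x * single c (1 : R)).order = x.order + c := by
  have : Nontrivial R := nontrivial_of_ne _ _ (leadingCoeff_ne_zero.mpr hx)
  rw [order_mul_of_ne_zero, order_single one_ne_zero]
  rwa [leadingCoeff_of_single, mul_one, leadingCoeff_ne_zero]

end HahnSeries

theorem Set.Finite.exists_pos_forall_dist_lt_eq {X : Type*} [MetricSpace X] {S : Set X}
    (hS : S.Finite) (x : X) : ∃ ε > 0, ∀ y ∈ S, dist y x < ε → y = x := by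
  have hnhds : (S \ {x})ᶜ ∈ nhds x :=
    hS.sdiff.isClosed.compl_mem_nhds fun hx => hx.2 rfl
  obtain ⟨ε, hε, hball⟩ := Metric.mem_nhds_iff.mp hnhds
  refine ⟨ε, hε, fun y hy hyx => ?_⟩
  by_contra hne
  exact hball hyx ⟨hy, hne⟩

theorem finite_setOf_sum_mul_single_eq_zero {R : Type*} [Semiring R]
    (f : ℝ →₀ HahnSeries ℝ R) (hf : f ≠ 0) :
    {t : ℝ | ∑ r ∈ f.support, f r * HahnSeries.single (t * r) (1 : R) = 0}.Finite := by
  refine ((f.support ×ˢ f.support).finite_toSet.image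
    fun p => ((f p.2).order - (f p.1).order) / (p.1 - p.2)).subset fun t ht => ?_
  have hcollide : ¬ Set.InjOn (fun r => (f r * HahnSeries.single (t * r) (1 : R)).order)
      f.support := fun hinj =>
    HahnSeries.sum_ne_zero_of_injOn_order (Finsupp.support_nonempty_iff.mpr hf)
      (fun r hr => HahnSeries.mul_single_one_ne_zero (Finsupp.mem_support_iff.mp hr) _)
      hinj ht
  simp only [Set.InjOn, not_forall] at hcollide
  obtain ⟨r, hr, r', hr', heq, hne⟩ := hcollide
  rw [HahnSeries.order_mul_single_one (Finsupp.mem_support_iff.mp hr),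
    HahnSeries.order_mul_single_one (Finsupp.mem_support_iff.mp hr')] at heq
  refine ⟨(r, r'), Finset.mk_mem_product hr hr', ?_⟩
  have hsub : r - r' ≠ 0 := sub_ne_zero.mpr hne
  field_simp
  linarith

theorem isolated_zeros_of_specialization_general (f : ℝ →₀ Λ) (hf : f ≠ 0) (t₀ : ℝ) :
    ∃ ε : ℝ, 0 < ε ∧ ∀ t : ℝ, 0 < |t - t₀| → |t - t₀| < ε →
      ∑ r ∈ f.support, f r * HahnSeries.single (t * r) (1 : ℂ) ≠ 0 := by
  obtain ⟨ε, hε, hisolated⟩ :=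
    (finite_setOf_sum_mul_single_eq_zero f hf).exists_pos_forall_dist_lt_eq t₀
  refine ⟨ε, hε, fun t hpos hlt hzero => hpos.ne' ?_⟩
  rw [hisolated t hzero (by rwa [Real.dist_eq]), sub_self, abs_zero]

/-- **Zeros of the specialization of a finite Novikov sum are isolated.**
If `f : ℝ →₀ Λ` is a nonzero finite formal sum `Σ_r f(r)·z^r ∈ Λ[z^ℝ]` and the
specialization `f(T^{t₀}) = Σ_r f(r)·T^{t₀·r}` vanishes, then there exists `ε > 0` such
that `f(T^t) ≠ 0` for all `t` with `0 < |t - t₀| < ε`. -/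
theorem isolated_zeros_of_specialization (f : ℝ →₀ Λ) (hf : f ≠ 0) (t₀ : ℝ)
    (h : ∑ r ∈ f.support, f r * HahnSeries.single (t₀ * r) (1 : ℂ) = 0) :
    ∃ ε : ℝ, 0 < ε ∧ ∀ t : ℝ, 0 < |t - t₀| → |t - t₀| < ε →
      ∑ r ∈ f.support, f r * HahnSeries.single (t * r) (1 : ℂ) ≠ 0 :=
  isolated_zeros_of_specialization_general f hf t₀
end

section
/- Let Λ = HahnSeries ℝ ℂ be the Novikov field and let D be an N × N matrix with entries in Λ[z^ℝ] = AddMonoidAlgebra Λ ℝ satisfying D·D = 0. For t ∈ ℝ, let D_t denote the matrix over Λ obtained by applying the specialization at z = T^t to every entry; then D_t·D_t = 0, so the range of the Λ-linear map v ↦ D_t·v is contained in its kernel. Then there exist c ∈ ℕ and a finite set F ⊆ ℝ such that for every t ∉ F, the Λ-dimension of the homology ker(D_t)/im(D_t) (the quotient of the kernel of v ↦ D_t·v by the range of v ↦ D_t·v) equals c. In other words, the dimension of the homology of the specialized 2-periodic complex is constant in t with finitely many exceptions. -/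
set_option synthInstance.maxHeartbeats 1000000
set_option maxHeartbeats 1000000
set_option maxSynthPendingDepth 3

/-- The Novikov field `Λ = ℂ((T^ℝ))`, realized as Hahn series. -/
local notation "Λ" => HahnSeries ℝ ℂ

/-- The specialization of a finite formal sum `f = Σ_r f(r)·z^r ∈ Λ[z^ℝ]` at `z = T^t`:
`f(T^t) = Σ_{r ∈ supp f} f(r)·T^{t·r} ∈ Λ`. -/
noncomputable def specializeAt (t : ℝ) (f : AddMonoidAlgebra Λ ℝ) : Λ :=
  ∑ r ∈ f.coeff.support, f.coeff r * HahnSeries.single (t * r) (1 : ℂ)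

/-!
Let `R = Λ[z^ℝ]` and let `r` be the rank of `D` over the fraction field of `R`. There `D` factors
as `B C` through `r` columns and admits `X, Y` with `X D Y = 1`; clearing denominators gives
`B C = a • D` and `X D Y = b • 1` over `R` with `a, b ≠ 0`. These identities survive every
specialisation `z = T^t` at which `a b` does not vanish, and they force `rank D_t = r`, hence a
homology of dimension `N - 2r`. A nonzero `f ∈ Λ[z^ℝ]` vanishes at only finitely many `t`: the
terms `f(s) T^{ts}` have orders `ord f(s) + t s`, which are pairwise distinct for all but
finitely many `t`, and then the term of least order cannot cancel.
-/

theorem HahnSeries.sum_ne_zero_of_injOn_order_s4 {Γ R ι : Type*} [AddCommMonoid Γ] [LinearOrder Γ]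
    [AddCommMonoid R] {s : Finset ι} (hs : s.Nonempty) {x : ι → HahnSeries Γ R}
    (hx : ∀ i ∈ s, x i ≠ 0) (hinj : Set.InjOn (fun i => (x i).order) s) :
    ∑ i ∈ s, x i ≠ 0 := by
  obtain ⟨i₀, hi₀, hmin⟩ := s.exists_min_image (fun i => (x i).order) hs
  intro hsum
  have hcoeff : (∑ i ∈ s, x i).coeff (x i₀).order = (x i₀).coeff (x i₀).order := by
    rw [HahnSeries.coeff_sum, Finset.sum_eq_single_of_mem i₀ hi₀]
    intro i hi hne
    exact HahnSeries.coeff_eq_zero_of_lt_order <|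
      (hmin i hi).lt_of_ne fun h => hne (hinj hi hi₀ h.symm)
  rw [hsum, HahnSeries.coeff_zero, eq_comm, HahnSeries.coeff_order_eq_zero] at hcoeff
  exact hx i₀ hi₀ hcoeff

noncomputable def specializeHom (t : ℝ) : AddMonoidAlgebra Λ ℝ →+* Λ :=
  (AddMonoidAlgebra.lift Λ Λ ℝ
    { toFun := fun r => HahnSeries.single (t * r.toAdd) (1 : ℂ)
      map_one' := by simp
      map_mul' := fun a b => by simp [mul_add] }).toRingHom

theorem specializeHom_apply (t : ℝ) (f : AddMonoidAlgebra Λ ℝ) :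
    specializeHom t f = specializeAt t f := by
  simp [specializeHom, AddMonoidAlgebra.lift_apply', specializeAt, Finsupp.sum]

theorem finite_setOf_specializeAt_eq_zero {f : AddMonoidAlgebra Λ ℝ} (hf : f ≠ 0) :
    {t : ℝ | specializeAt t f = 0}.Finite := by
  set S := f.coeff.support
  have hS : S.Nonempty := Finsupp.support_nonempty_iff.2 (mt AddMonoidAlgebra.coeff_eq_zero.1 hf)
  have hT (a : ℝ) : HahnSeries.single a (1 : ℂ) ≠ 0 := by simp
  refine ((S ×ˢ S).image fun p : ℝ × ℝ =>
    ((f.coeff p.2).order - (f.coeff p.1).order) / (p.1 - p.2)).finite_toSet.subset fun t ht => ?_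
  by_contra hbad
  refine HahnSeries.sum_ne_zero_of_injOn_order_s4 hS
    (fun r hr => mul_ne_zero (Finsupp.mem_support_iff.1 hr) (hT _)) (fun r hr s hs hrs => ?_) ht
  by_contra hne
  simp only [HahnSeries.order_mul (Finsupp.mem_support_iff.1 hr) (hT _),
    HahnSeries.order_mul (Finsupp.mem_support_iff.1 hs) (hT _),
    HahnSeries.order_single one_ne_zero] at hrs
  refine hbad (Finset.mem_image.2 ⟨(r, s), Finset.mem_product.2 ⟨hr, hs⟩, ?_⟩)
  field_simp [sub_ne_zero.2 hne]
  linarith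

section LinearAlgebra

variable {K V : Type*} [Field K] [AddCommGroup V] [Module K V]

theorem LinearMap.finrank_ker_quotient_range_of_comp_self_eq_zero [FiniteDimensional K V]
    {f : V →ₗ[K] V} (hf : f ∘ₗ f = 0) :
    Module.finrank K (LinearMap.ker f ⧸ (LinearMap.range f).comap (LinearMap.ker f).subtype) =
      Module.finrank K V - 2 * Module.finrank K (LinearMap.range f) := by
  have hle : LinearMap.range f ≤ LinearMap.ker f := LinearMap.range_le_ker_iff.2 hf
  have hquot := Submodule.finrank_quotient_add_finrank
    ((LinearMap.range f).comap (LinearMap.ker f).subtype)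
  rw [(Submodule.comapSubtypeEquivOfLe hle).finrank_eq] at hquot
  have hrank := LinearMap.finrank_range_add_finrank_ker f
  have hmono := Submodule.finrank_mono hle
  omega

theorem LinearMap.exists_comp_eq_and_comp_comp_eq_id {W : Type*} [AddCommGroup W] [Module K W]
    (f : V →ₗ[K] W) [FiniteDimensional K (LinearMap.range f)] {r : ℕ}
    (hr : Module.finrank K (LinearMap.range f) = r) :
    ∃ (b : (Fin r → K) →ₗ[K] W) (c : V →ₗ[K] Fin r → K) (x : W →ₗ[K] Fin r → K)
      (y : (Fin r → K) →ₗ[K] V), b ∘ₗ c = f ∧ x ∘ₗ f ∘ₗ y = LinearMap.id := by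
  let e := LinearEquiv.ofFinrankEq (LinearMap.range f) (Fin r → K)
    (hr.trans (Module.finrank_fin_fun K).symm)
  let b := (LinearMap.range f).subtype ∘ₗ e.symm.toLinearMap
  let c := e.toLinearMap ∘ₗ f.rangeRestrict
  obtain ⟨x, hx⟩ := b.exists_leftInverse_of_injective <| LinearMap.ker_eq_bot.2 <|
    (LinearMap.range f).injective_subtype.comp e.symm.injective
  obtain ⟨y, hy⟩ := c.exists_rightInverse_of_surjective <| LinearMap.range_eq_top.2 <|
    e.surjective.comp f.surjective_rangeRestrict
  have hbc : b ∘ₗ c = f := by ext v; simp [b, c]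
  refine ⟨b, c, x, y, hbc, ?_⟩
  rw [← hbc, LinearMap.comp_assoc, hy, LinearMap.comp_id, hx]

end LinearAlgebra

namespace Matrix

variable {m n : Type*}

theorem map_smul_ringHom {R S : Type*} [NonAssocSemiring R] [NonAssocSemiring S] (φ : R →+* S)
    (a : R) (Z : Matrix m n R) : (a • Z).map φ = φ a • Z.map φ :=
  Matrix.map_smulₛₗ φ φ a (map_mul φ a) Z

variable [Fintype m] [Fintype n]

theorem exists_map_algebraMap_eq_smul {R S : Type*} [CommRing R] [CommRing S] [Algebra R S]
    (M : Submonoid R) [IsLocalization M S] (Z : Matrix m n S) :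
    ∃ (d : M) (Z' : Matrix m n R), Z'.map (algebraMap R S) = algebraMap R S d • Z := by
  obtain ⟨d, hd⟩ :=
    IsLocalization.exist_integer_multiples_of_finite M fun p : m × n => Z p.1 p.2
  choose Z' hZ' using hd
  exact ⟨d, Matrix.of fun i j => Z' (i, j),
    Matrix.ext fun i j => (hZ' (i, j)).trans (Algebra.smul_def _ _)⟩

section Field

variable {K : Type*} [Field K]

theorem exists_mul_eq_and_mul_mul_eq_one [DecidableEq m] [DecidableEq n] (M : Matrix m n K) :
    ∃ (B : Matrix m (Fin M.rank) K) (C : Matrix (Fin M.rank) n K)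
      (X : Matrix (Fin M.rank) m K) (Y : Matrix n (Fin M.rank) K),
      B * C = M ∧ X * M * Y = 1 := by
  obtain ⟨b, c, x, y, hbc, hxy⟩ := M.mulVecLin.exists_comp_eq_and_comp_comp_eq_id rfl
  have hM : LinearMap.toMatrix' M.mulVecLin = M := by
    rw [← Matrix.toLin'_apply', LinearMap.toMatrix'_toLin']
  refine ⟨LinearMap.toMatrix' b, LinearMap.toMatrix' c, LinearMap.toMatrix' x,
    LinearMap.toMatrix' y, ?_, ?_⟩
  · calc LinearMap.toMatrix' b * LinearMap.toMatrix' c = LinearMap.toMatrix' (b ∘ₗ c) :=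
          (LinearMap.toMatrix'_comp b c).symm
      _ = M := by rw [hbc, hM]
  · calc LinearMap.toMatrix' x * M * LinearMap.toMatrix' y
        = LinearMap.toMatrix' (x ∘ₗ M.mulVecLin ∘ₗ y) := by
          rw [LinearMap.toMatrix'_comp, LinearMap.toMatrix'_comp, hM, Matrix.mul_assoc]
      _ = 1 := by rw [hxy, LinearMap.toMatrix'_id]

theorem rank_eq_of_mul_eq_smul_of_mul_mul_eq_smul_one {r : ℕ} {A : Matrix m n K}
    {B : Matrix m (Fin r) K} {C : Matrix (Fin r) n K} {X : Matrix (Fin r) m K}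
    {Y : Matrix n (Fin r) K} {a b : K} (ha : a ≠ 0) (hb : b ≠ 0)
    (hBC : B * C = a • A) (hXY : X * A * Y = b • 1) : A.rank = r := by
  apply le_antisymm
  · calc A.rank = (a • A).rank :=
          (rank_smul_of_mem_nonZeroDivisors A (mem_nonZeroDivisors_of_ne_zero ha)).symm
      _ ≤ B.rank := hBC ▸ rank_mul_le_left B C
      _ ≤ r := (rank_le_card_width B).trans (Fintype.card_fin r).le
  · calc r = (b • (1 : Matrix (Fin r) (Fin r) K)).rank := by
          rw [rank_smul_of_mem_nonZeroDivisors _ (mem_nonZeroDivisors_of_ne_zero hb), rank_one,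
            Fintype.card_fin]
      _ = (X * (A * Y)).rank := by rw [← hXY, Matrix.mul_assoc]
      _ ≤ (A * Y).rank := rank_mul_le_right X _
      _ ≤ A.rank := rank_mul_le_left A Y

end Field

variable [DecidableEq m] [DecidableEq n] {R : Type*} [CommRing R] [IsDomain R] (K : Type*) [Field K]
  [Algebra R K] [IsFractionRing R K]

theorem exists_mul_eq_smul_and_mul_mul_eq_smul_one (D : Matrix m n R) :
    ∃ (B : Matrix m (Fin (D.map (algebraMap R K)).rank) R)
      (C : Matrix (Fin (D.map (algebraMap R K)).rank) n R)
      (X : Matrix (Fin (D.map (algebraMap R K)).rank) m R)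
      (Y : Matrix n (Fin (D.map (algebraMap R K)).rank) R) (a b : R),
      a ≠ 0 ∧ b ≠ 0 ∧ B * C = a • D ∧ X * D * Y = b • 1 := by
  have hinj : Function.Injective (algebraMap R K) := IsFractionRing.injective R K
  obtain ⟨B, C, X, Y, hBC, hXY⟩ := (D.map (algebraMap R K)).exists_mul_eq_and_mul_mul_eq_one
  obtain ⟨dB, B', hB'⟩ := exists_map_algebraMap_eq_smul (nonZeroDivisors R) B
  obtain ⟨dC, C', hC'⟩ := exists_map_algebraMap_eq_smul (nonZeroDivisors R) C
  obtain ⟨dX, X', hX'⟩ := exists_map_algebraMap_eq_smul (nonZeroDivisors R) X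
  obtain ⟨dY, Y', hY'⟩ := exists_map_algebraMap_eq_smul (nonZeroDivisors R) Y
  refine ⟨B', C', X', Y', dB * dC, dX * dY,
    mul_ne_zero (nonZeroDivisors.coe_ne_zero dB) (nonZeroDivisors.coe_ne_zero dC),
    mul_ne_zero (nonZeroDivisors.coe_ne_zero dX) (nonZeroDivisors.coe_ne_zero dY),
    map_injective hinj ?_, map_injective hinj ?_⟩
  · dsimp only
    rw [Matrix.map_mul, hB', hC', map_smul_ringHom, Matrix.smul_mul, Matrix.mul_smul, hBC,
      smul_smul, map_mul]
  · dsimp only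
    rw [Matrix.map_mul, Matrix.map_mul, hX', hY', map_smul_ringHom, Matrix.smul_mul,
      Matrix.smul_mul, Matrix.mul_smul, hXY, smul_smul, map_mul,
      Matrix.map_one _ (map_zero _) (map_one _)]

theorem exists_ne_zero_forall_rank_map_eq (L : Type*) [Field L] (D : Matrix m n R) :
    ∃ d : R, d ≠ 0 ∧
      ∀ φ : R →+* L, φ d ≠ 0 → (D.map φ).rank = (D.map (algebraMap R K)).rank := by
  obtain ⟨B, C, X, Y, a, b, ha, hb, hBC, hXY⟩ := exists_mul_eq_smul_and_mul_mul_eq_smul_one K D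
  refine ⟨a * b, mul_ne_zero ha hb, fun φ hφ => ?_⟩
  rw [map_mul, mul_ne_zero_iff] at hφ
  refine rank_eq_of_mul_eq_smul_of_mul_mul_eq_smul_one (B := B.map φ) (C := C.map φ)
    (X := X.map φ) (Y := Y.map φ) hφ.1 hφ.2 ?_ ?_
  · rw [← Matrix.map_mul, hBC, map_smul_ringHom]
  · rw [← Matrix.map_mul, ← Matrix.map_mul, hXY, map_smul_ringHom,
      Matrix.map_one _ (map_zero _) (map_one _)]

end Matrix

/-- **Constancy (with finitely many exceptions) of the homology of a specialized
2-periodic complex.**  If `D` is an `N × N` matrix over `Λ[z^ℝ]` with `D·D = 0`, then the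
`Λ`-dimension of the homology `ker(D_t)/im(D_t)` of the specialization at `z = T^t` is
constant in `t ∈ ℝ`, outside a finite set of exceptions. -/
theorem homology_dim_specialized_complex_constant_cofinite (N : ℕ)
    (D : Matrix (Fin N) (Fin N) (AddMonoidAlgebra Λ ℝ)) (hD : D * D = 0) :
    ∃ (c : ℕ) (F : Set ℝ), F.Finite ∧
      ∀ t : ℝ, t ∉ F →
        Module.finrank Λ
          (↥(LinearMap.ker (Matrix.mulVecLin (D.map (specializeAt t)))) ⧸
            Submodule.comap
              (LinearMap.ker (Matrix.mulVecLin (D.map (specializeAt t)))).subtype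
              (LinearMap.range (Matrix.mulVecLin (D.map (specializeAt t))))) = c := by
  set K := FractionRing (AddMonoidAlgebra Λ ℝ)
  obtain ⟨d, hd, hrank⟩ := Matrix.exists_ne_zero_forall_rank_map_eq K Λ D
  refine ⟨N - 2 * (D.map (algebraMap _ K)).rank, _, finite_setOf_specializeAt_eq_zero hd,
    fun t ht => ?_⟩
  have hDt : D.map (specializeAt t) = D.map (specializeHom t) :=
    Matrix.ext fun i j => (specializeHom_apply t (D i j)).symm
  have hsq :
      (D.map (specializeHom t)).mulVecLin ∘ₗ (D.map (specializeHom t)).mulVecLin = 0 := by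
    rw [← Matrix.mulVecLin_mul, ← Matrix.map_mul, hD, Matrix.map_zero _ (map_zero _),
      Matrix.mulVecLin_zero]
  rw [hDt, LinearMap.finrank_ker_quotient_range_of_comp_self_eq_zero hsq,
    Module.finrank_fin_fun]
  exact congrArg (N - 2 * ·) (hrank _ (by rwa [specializeHom_apply]))
end
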